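/- Ehrhard's inequality in dimension 1: for non-empty convex Borel subsets A, B of ℝ (i.e., intervals) and 0 ≤ λ ≤ 1, Φ^{−1}(γ₁(λA + (1−λ)B)) ≥ λΦ^{−1}(γ₁(A)) + (1−λ)Φ^{−1}(γ₁(B)), where λA + (1−λ)B is the Minkowski combination. -/

import Mathlib

open MeasureTheory Real

/-- Standard Gaussian measure on ℝⁿ (as Euclidean space). -/
noncomputable def stdGaussian (n : ℕ) : Measure (EuclideanSpace ℝ (Fin n)) :=
  volume.withDensity fun x => ENNReal.ofReal ((2 * π) ^ (-(n : ℝ) / 2) * Real.exp (-‖x‖ ^ 2 / 2))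

/-- Standard Gaussian measure on ℝ. -/
noncomputable def gaussian1 : Measure ℝ :=
  volume.withDensity fun x => ENNReal.ofReal ((2 * π) ^ (-(1 : ℝ) / 2) * Real.exp (-x ^ 2 / 2))

/-- Standard Gaussian cumulative distribution function. -/
noncomputable def Phi (x : ℝ) : ℝ := (gaussian1 (Set.Iic x)).toReal

/-- Inverse of the standard Gaussian CDF. -/
noncomputable def PhiInv : ℝ → ℝ := Function.invFun Phi

open Pointwise

/-- Inverse Gaussian CDF on measures, with the conventions Φ⁻¹(0) = -∞, Φ⁻¹(1) = +∞. -/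
noncomputable def PhiInvE (p : ENNReal) : EReal :=
  if p = 0 then ⊥ else if 1 ≤ p then ⊤ else ((PhiInv p.toReal : ℝ) : EReal)

/-!
The map `(a, b) ↦ Φ⁻¹(Φ b - Φ a)` is concave on `{a < b}`. Along a line its second derivative is,
up to the factor `ψ(v)⁻²`, a quadratic form in the direction; this form is negative semidefinite:
its diagonal by the monotonicity of `t / ψ t`, its determinant by the monotonicity of
`t (1 - Φ t) / ψ t`, which in turn comes from the Mills-ratio bound.

If `Φ x < γ₁(A)` and `Φ y < γ₁(B)`, inner regularity gives `a₁, b₁ ∈ A` and `a₂, b₂ ∈ B` with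
`Φ x < Φ b₁ - Φ a₁` and `Φ y < Φ b₂ - Φ a₂`. The convex set `λA + (1 - λ)B` contains
`[λa₁ + (1 - λ)a₂, λb₁ + (1 - λ)b₂]`, so concavity yields `Φ(λx + (1 - λ)y) ≤ γ₁(λA + (1 - λ)B)`.
-/

open ProbabilityTheory Set Filter Topology
open scoped ENNReal

local notation "ψ" => gaussianPDFReal 0 1

lemma gaussianPDFReal_zero_one (x : ℝ) : ψ x = (√(2 * π))⁻¹ * exp (-x ^ 2 / 2) := by
  simp [gaussianPDFReal]

lemma gaussianPDFReal_zero_one_neg (x : ℝ) : ψ (-x) = ψ x := by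
  simp only [gaussianPDFReal_zero_one, neg_sq]

lemma gaussianPDFReal_zero_one_pos (x : ℝ) : 0 < ψ x := gaussianPDFReal_pos 0 1 x one_ne_zero

lemma hasDerivAt_gaussianPDFReal_zero_one (x : ℝ) : HasDerivAt ψ (-x * ψ x) x := by
  have h : HasDerivAt (fun t : ℝ => -t ^ 2 / 2) (-(2 * x) / 2) x := by
    simpa using ((hasDerivAt_pow 2 x).neg).div_const 2
  rw [show ψ = fun t => (√(2 * π))⁻¹ * exp (-t ^ 2 / 2) from funext gaussianPDFReal_zero_one]
  exact (h.exp.const_mul _).congr_deriv (by ring)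

lemma gaussian1_eq_gaussianReal : gaussian1 = gaussianReal 0 1 := by
  rw [gaussianReal_of_var_ne_zero _ one_ne_zero, gaussian1]
  congr 1; ext x
  rw [gaussianPDF, gaussianPDFReal_zero_one, sqrt_eq_rpow, ← rpow_neg (by positivity)]
  norm_num

lemma Phi_eq_cdf : Phi = cdf (gaussianReal 0 1) := by
  ext x; rw [Phi, cdf_eq_real, gaussian1_eq_gaussianReal]; rfl

lemma Phi_eq_integral (x : ℝ) : Phi x = ∫ t in Iic x, ψ t := by
  rw [Phi, gaussian1_eq_gaussianReal, gaussianReal_apply_eq_integral _ one_ne_zero,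
    ENNReal.toReal_ofReal (integral_nonneg (gaussianPDFReal_nonneg 0 1))]

lemma hasDerivAt_Phi (x : ℝ) : HasDerivAt Phi (ψ x) x := by
  have hψ : Continuous ψ := by
    simp_rw [gaussianPDFReal_def]; fun_prop
  have hint := (integrable_gaussianPDFReal 0 1).integrableOn (s := Iic (0 : ℝ))
  have key : ∀ y, Phi y = Phi 0 + ∫ t in (0 : ℝ)..y, ψ t := fun y => by
    rw [Phi_eq_integral, Phi_eq_integral, ← intervalIntegral.integral_Iic_sub_Iic hint
      (integrable_gaussianPDFReal 0 1).integrableOn, add_sub_cancel]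
  rw [funext key]
  exact (intervalIntegral.integral_hasDerivAt_right (hψ.intervalIntegrable _ _)
    (hψ.stronglyMeasurableAtFilter _ _) hψ.continuousAt).const_add _

lemma Phi_neg (x : ℝ) : Phi (-x) = 1 - Phi x := by
  have h := intervalIntegral.integral_Iic_add_Ioi (f := ψ) (b := x) (μ := volume)
    (integrable_gaussianPDFReal 0 1).integrableOn (integrable_gaussianPDFReal 0 1).integrableOn
  rw [integral_gaussianPDFReal_eq_one 0 one_ne_zero, ← Phi_eq_integral] at h
  rw [Phi_eq_integral, ← integral_comp_neg_Ioi]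
  simp_rw [gaussianPDFReal_zero_one, neg_sq] at h ⊢
  linarith

lemma gaussian1_Icc (a b : ℝ) :
    gaussian1 (Icc a b) = ENNReal.ofReal (Phi b - Phi a) := by
  have := nullSingletonClass_gaussianReal (μ := 0) one_ne_zero
  rw [gaussian1_eq_gaussianReal, ← measure_congr Ioc_ae_eq_Icc, Phi_eq_cdf,
    ← (cdf (gaussianReal 0 1)).measure_Ioc, measure_cdf]

lemma strictMono_Phi : StrictMono Phi :=
  strictMono_of_hasDerivAt_pos hasDerivAt_Phi gaussianPDFReal_zero_one_pos

lemma continuous_Phi : Continuous Phi :=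
  continuous_iff_continuousAt.2 fun x => (hasDerivAt_Phi x).continuousAt

lemma tendsto_Phi_atTop : Tendsto Phi atTop (𝓝 1) := Phi_eq_cdf ▸ tendsto_cdf_atTop _

lemma tendsto_Phi_atBot : Tendsto Phi atBot (𝓝 0) := Phi_eq_cdf ▸ tendsto_cdf_atBot _

lemma Phi_pos (x : ℝ) : 0 < Phi x :=
  (Phi_eq_cdf ▸ cdf_nonneg _ (x - 1)).trans_lt (strictMono_Phi (sub_one_lt x))

lemma Phi_lt_one (x : ℝ) : Phi x < 1 :=
  (strictMono_Phi (lt_add_one x)).trans_le (Phi_eq_cdf ▸ cdf_le_one _ (x + 1))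

lemma PhiInv_Phi (x : ℝ) : PhiInv (Phi x) = x :=
  Function.leftInverse_invFun strictMono_Phi.injective x

lemma Phi_PhiInv {y : ℝ} (hy : y ∈ Ioo (0 : ℝ) 1) : Phi (PhiInv y) = y :=
  Function.invFun_eq <| mem_range_of_exists_le_of_exists_ge continuous_Phi
    ((tendsto_Phi_atBot.eventually_lt_const hy.1).exists.imp fun _ => le_of_lt)
    ((tendsto_Phi_atTop.eventually_const_lt hy.2).exists.imp fun _ => le_of_lt)

lemma le_PhiInv_iff {x y : ℝ} (hy : y ∈ Ioo (0 : ℝ) 1) : x ≤ PhiInv y ↔ Phi x ≤ y := by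
  conv_rhs => rw [← Phi_PhiInv hy]
  exact strictMono_Phi.le_iff_le.symm

lemma lt_PhiInv_iff {x y : ℝ} (hy : y ∈ Ioo (0 : ℝ) 1) : x < PhiInv y ↔ Phi x < y := by
  conv_rhs => rw [← Phi_PhiInv hy]
  exact strictMono_Phi.lt_iff_lt.symm

lemma hasDerivAt_PhiInv {y : ℝ} (hy : y ∈ Ioo (0 : ℝ) 1) :
    HasDerivAt PhiInv (ψ (PhiInv y))⁻¹ y := by
  have hmono : MonotoneOn PhiInv (Ioo 0 1) := fun u hu w hw huw =>
    (le_PhiInv_iff hw).2 ((Phi_PhiInv hu).trans_le huw)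
  have himage : PhiInv '' Ioo 0 1 = univ :=
    eq_univ_of_forall fun x => ⟨Phi x, ⟨Phi_pos x, Phi_lt_one x⟩, PhiInv_Phi x⟩
  refine HasDerivAt.of_local_left_inverse
    (continuousAt_of_monotoneOn_of_image_mem_nhds hmono (Ioo_mem_nhds hy.1 hy.2)
      (himage ▸ univ_mem)) (hasDerivAt_Phi _) (gaussianPDFReal_zero_one_pos _).ne' ?_
  filter_upwards [Ioo_mem_nhds hy.1 hy.2] with z hz using Phi_PhiInv hz

lemma tendsto_gaussianPDFReal_zero_one_atTop : Tendsto ψ atTop (𝓝 0) := by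
  have h : Tendsto (fun s : ℝ => s ^ 2 / 2) atTop atTop :=
    (tendsto_pow_atTop two_ne_zero).atTop_div_const two_pos
  simpa [funext gaussianPDFReal_zero_one, neg_div] using
    (tendsto_exp_neg_atTop_nhds_zero.comp h).const_mul (√(2 * π))⁻¹

lemma monotone_id_div_gaussianPDFReal : Monotone fun t => t / ψ t := by
  refine monotone_of_hasDerivAt_nonneg (fun t => (hasDerivAt_id' t).div
    (hasDerivAt_gaussianPDFReal_zero_one t) (gaussianPDFReal_zero_one_pos t).ne') fun t => ?_
  have := gaussianPDFReal_zero_one_pos t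
  exact div_nonneg (by nlinarith [sq_nonneg t]) (sq_nonneg _)

/-- A lower bound for the Mills ratio `(1 - Φ t) / ψ t`. -/
lemma mul_gaussianPDFReal_le_one_add_sq_mul (t : ℝ) : t * ψ t ≤ (1 + t ^ 2) * (1 - Phi t) := by
  set D : ℝ → ℝ := fun s => (1 - Phi s) - s * ψ s / (1 + s ^ 2)
  have hD : ∀ s, HasDerivAt D (-2 * ψ s / (1 + s ^ 2) ^ 2) s := fun s =>
    (((hasDerivAt_Phi s).const_sub 1).sub (((hasDerivAt_id' s).mul
      (hasDerivAt_gaussianPDFReal_zero_one s)).div ((hasDerivAt_pow 2 s).const_add 1)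
        (by positivity))).congr_deriv (by simp only [Pi.mul_apply]; field_simp; ring)
  have hanti : Antitone D := antitone_of_hasDerivAt_nonpos hD fun s =>
    div_nonpos_of_nonpos_of_nonneg (by linarith [gaussianPDFReal_zero_one_pos s]) (by positivity)
  have hlim : Tendsto D atTop (𝓝 0) := by
    have hfrac : Tendsto (fun s => s * ψ s / (1 + s ^ 2)) atTop (𝓝 0) := by
      refine tendsto_of_tendsto_of_tendsto_of_le_of_le' tendsto_const_nhds
        tendsto_gaussianPDFReal_zero_one_atTop ?_ ?_ <;>
        filter_upwards [eventually_ge_atTop 0] with s hs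
      · exact div_nonneg (mul_nonneg hs (gaussianPDFReal_zero_one_pos s).le) (by positivity)
      · rw [div_le_iff₀ (by positivity)]
        nlinarith [gaussianPDFReal_zero_one_pos s, sq_nonneg (s - 1)]
    simpa using (tendsto_Phi_atTop.const_sub 1).sub hfrac
  have hDt : 0 ≤ D t := hanti.le_of_tendsto hlim t
  have : 0 < 1 + t ^ 2 := by positivity
  simp only [D, sub_nonneg, div_le_iff₀ this] at hDt
  linarith

lemma monotone_mul_one_sub_Phi_div : Monotone fun t => t * (1 - Phi t) / ψ t := by
  refine monotone_of_hasDerivAt_nonneg (fun t => ((hasDerivAt_id' t).mul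
    ((hasDerivAt_Phi t).const_sub 1)).div (hasDerivAt_gaussianPDFReal_zero_one t)
      (gaussianPDFReal_zero_one_pos t).ne') fun t => ?_
  have := gaussianPDFReal_zero_one_pos t
  have := mul_gaussianPDFReal_le_one_add_sq_mul t
  exact div_nonneg (by simp only [Pi.mul_apply]; nlinarith) (sq_nonneg _)

lemma gaussianPDFReal_div_add_le {v b c : ℝ} (hv : 0 < v) (hb : 0 < b) (hc : 0 < c)
    (h : Phi v = Phi b + Phi c - 1) : ψ b / b + ψ c / c ≤ ψ v / v := by
  set H := fun t => t * (1 - Phi t) / ψ t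
  have hvb : v ≤ b := strictMono_Phi.le_iff_le.1 (by linarith [Phi_lt_one c])
  have hvc : v ≤ c := strictMono_Phi.le_iff_le.1 (by linarith [Phi_lt_one b])
  have hratio : ∀ {t}, 0 < t → ψ t / t = (1 - Phi t) / H t := fun {t} ht => by
    have : 1 - Phi t ≠ 0 := by linarith [Phi_lt_one t]
    have := gaussianPDFReal_zero_one_pos t
    simp only [H]
    field_simp
  have hHv : 0 < H v :=
    div_pos (mul_pos hv (by linarith [Phi_lt_one v])) (gaussianPDFReal_zero_one_pos v)
  rw [hratio hv, hratio hb, hratio hc]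
  calc (1 - Phi b) / H b + (1 - Phi c) / H c
      ≤ (1 - Phi b) / H v + (1 - Phi c) / H v := by
        gcongr
        · linarith [Phi_lt_one b]
        · exact monotone_mul_one_sub_Phi_div hvb
        · linarith [Phi_lt_one c]
        · exact monotone_mul_one_sub_Phi_div hvc
    _ = (1 - Phi v) / H v := by rw [← add_div, h]; ring_nf

lemma mul_gaussianPDFReal_add_le {v b c : ℝ} (h : Phi v = Phi b + Phi c - 1) :
    b * v * ψ c + c * v * ψ b ≤ b * c * ψ v := by
  wlog hcb : c ≤ b generalizing b c
  · linarith [this (b := c) (c := b) (by linarith) (by linarith)]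
  have hvc : v < c := strictMono_Phi.lt_iff_lt.1 (by linarith [Phi_lt_one b])
  have hbc : -c < b := strictMono_Phi.lt_iff_lt.1 (by rw [Phi_neg]; linarith [Phi_pos v])
  have hψv := gaussianPDFReal_zero_one_pos v
  have hψb := gaussianPDFReal_zero_one_pos b
  have hψc := gaussianPDFReal_zero_one_pos c
  rcases lt_or_ge 0 v with hv | hv
  · have key := gaussianPDFReal_div_add_le hv (by linarith) (by linarith) h
    rw [div_add_div _ _ (by linarith) (by linarith), div_le_div_iff₀ (by nlinarith) hv] at key
    nlinarith
  rcases le_or_gt 0 c with hc | hc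
  · have hb := hc.trans hcb
    have : v * (b * ψ c + c * ψ b) ≤ 0 :=
      mul_nonpos_of_nonpos_of_nonneg hv (add_nonneg (by positivity) (by positivity))
    nlinarith [mul_nonneg (mul_nonneg hb hc) hψv.le]
  · -- the reflected triple `(-c, b, -v)` satisfies the same relation and is positive
    have key := gaussianPDFReal_div_add_le (v := -c) (b := b) (c := -v) (by linarith)
      (by linarith) (by linarith) (by rw [Phi_neg, Phi_neg]; linarith)
    rw [gaussianPDFReal_zero_one_neg, gaussianPDFReal_zero_one_neg,
      div_add_div _ _ (by linarith) (by linarith), div_le_div_iff₀ (by nlinarith) (by linarith)]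
      at key
    nlinarith

lemma quadratic_form_nonneg {a b c : ℝ} (ha : 0 ≤ a) (hc : 0 ≤ c) (h : b ^ 2 ≤ a * c)
    (x y : ℝ) : 0 ≤ a * x ^ 2 + 2 * b * x * y + c * y ^ 2 := by
  rcases ha.eq_or_lt with rfl | ha
  · obtain rfl : b = 0 := by nlinarith [sq_nonneg b]
    nlinarith [sq_nonneg y]
  · nlinarith [sq_nonneg (a * x + b * y), mul_nonneg (sub_nonneg.2 h) (sq_nonneg y)]

/-- With `Φ v = Φ b - Φ a`, this is `ψ(v)² ∂²_t Φ⁻¹(Φ(b + t q) - Φ(a + t p))` at `t = 0`. -/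
lemma gaussian_hessian_nonpos {a b v : ℝ} (h : Phi v = Phi b - Phi a) (p q : ℝ) :
    ψ v * (a * ψ a * p ^ 2 - b * ψ b * q ^ 2) + v * (ψ b * q - ψ a * p) ^ 2 ≤ 0 := by
  have hψa := gaussianPDFReal_zero_one_pos a
  have hψb := gaussianPDFReal_zero_one_pos b
  have hψv := gaussianPDFReal_zero_one_pos v
  have hvb : v ≤ b := strictMono_Phi.le_iff_le.1 (by linarith [Phi_pos a])
  have hav : a ≤ -v := strictMono_Phi.le_iff_le.1 (by rw [Phi_neg]; linarith [Phi_lt_one b])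
  have hα : 0 ≤ -a * ψ v - v * ψ a := by
    have : a / ψ a ≤ -v / ψ (-v) := monotone_id_div_gaussianPDFReal hav
    rw [gaussianPDFReal_zero_one_neg, div_le_div_iff₀ hψa hψv] at this
    linarith
  have hβ : 0 ≤ b * ψ v - v * ψ b := by
    have : v / ψ v ≤ b / ψ b := monotone_id_div_gaussianPDFReal hvb
    rw [div_le_div_iff₀ hψv hψb] at this
    linarith
  have hdet : (v * ψ a * ψ b) ^ 2 ≤ ψ a * (-a * ψ v - v * ψ a) * (ψ b * (b * ψ v - v * ψ b)) := by
    have key := mul_gaussianPDFReal_add_le (v := v) (b := b) (c := -a) (by rw [Phi_neg]; linarith)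
    rw [gaussianPDFReal_zero_one_neg] at key
    have := mul_nonneg (mul_pos (mul_pos hψa hψb) hψv).le (sub_nonneg.2 key)
    linarith
  nlinarith [quadratic_form_nonneg (mul_nonneg hψa.le hα) (mul_nonneg hψb.le hβ) hdet p q]

lemma Phi_sub_mem_Ioo {a b : ℝ} (h : a < b) : Phi b - Phi a ∈ Ioo (0 : ℝ) 1 :=
  ⟨sub_pos.2 (strictMono_Phi h), by linarith [Phi_lt_one b, Phi_pos a]⟩

lemma concaveOn_PhiInv_comp {U : Set ℝ} (hU : Convex ℝ U) {P P' P'' : ℝ → ℝ}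
    (hP : ∀ t ∈ U, P t ∈ Ioo (0 : ℝ) 1) (hP' : ∀ t ∈ U, HasDerivAt P (P' t) t)
    (hP'' : ∀ t ∈ U, HasDerivAt P' (P'' t) t)
    (hneg : ∀ t ∈ U, ψ (PhiInv (P t)) * P'' t + PhiInv (P t) * P' t ^ 2 ≤ 0) :
    ConcaveOn ℝ U fun t => PhiInv (P t) := by
  set g := fun t => PhiInv (P t)
  have hg : ∀ t ∈ U, HasDerivAt g ((ψ (g t))⁻¹ * P' t) t := fun t ht =>
    (hasDerivAt_PhiInv (hP t ht)).comp t (hP' t ht)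
  have hg' : ∀ t ∈ U, HasDerivAt (fun t => (ψ (g t))⁻¹ * P' t)
      (-(-g t * ψ (g t) * ((ψ (g t))⁻¹ * P' t)) / ψ (g t) ^ 2 * P' t +
        (ψ (g t))⁻¹ * P'' t) t := fun t ht =>
    (((hasDerivAt_gaussianPDFReal_zero_one _).comp t (hg t ht)).inv
      (gaussianPDFReal_zero_one_pos _).ne').mul (hP'' t ht)
  refine concaveOn_of_hasDerivWithinAt2_nonpos hU
    (fun t ht => (hg t ht).continuousAt.continuousWithinAt)
    (fun t ht => (hg t (interior_subset ht)).hasDerivWithinAt)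
    (fun t ht => (hg' t (interior_subset ht)).hasDerivWithinAt) fun t ht => ?_
  have hψ := gaussianPDFReal_zero_one_pos (g t)
  calc _ = (ψ (g t) * P'' t + g t * P' t ^ 2) / ψ (g t) ^ 2 := by field_simp; ring
    _ ≤ 0 := div_nonpos_of_nonpos_of_nonneg (hneg t (interior_subset ht)) (sq_nonneg _)

theorem concaveOn_PhiInv_Phi_sub :
    ConcaveOn ℝ {p : ℝ × ℝ | p.1 < p.2} fun p => PhiInv (Phi p.2 - Phi p.1) := by
  have hconv : Convex ℝ {p : ℝ × ℝ | p.1 < p.2} := by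
    simpa [sub_neg] using convex_halfSpace_lt (f := fun p : ℝ × ℝ => p.1 - p.2)
      (LinearMap.fst ℝ ℝ ℝ - LinearMap.snd ℝ ℝ ℝ).isLinear 0
  refine ⟨hconv, fun x hx y hy s t hs ht hst => ?_⟩
  obtain rfl : t = 1 - s := by linarith
  set a := AffineMap.lineMap (k := ℝ) y.1 x.1
  set b := AffineMap.lineMap (k := ℝ) y.2 x.2
  have hab : ∀ τ ∈ Icc (0 : ℝ) 1, a τ < b τ := fun τ hτ => by
    have := hconv hy hx (sub_nonneg.2 hτ.2) hτ.1 (by ring)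
    simpa [a, b, AffineMap.lineMap_apply_module] using this
  have hline : ConcaveOn ℝ (Icc 0 1) fun τ => PhiInv (Phi (b τ) - Phi (a τ)) := by
    refine concaveOn_PhiInv_comp (convex_Icc 0 1)
      (P' := fun τ => ψ (b τ) * (x.2 - y.2) - ψ (a τ) * (x.1 - y.1))
      (P'' := fun τ => -b τ * ψ (b τ) * (x.2 - y.2) * (x.2 - y.2) -
        -a τ * ψ (a τ) * (x.1 - y.1) * (x.1 - y.1))
      (fun τ hτ => Phi_sub_mem_Ioo (hab τ hτ))
      (fun τ _ => ((hasDerivAt_Phi _).comp τ AffineMap.hasDerivAt_lineMap).sub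
        ((hasDerivAt_Phi _).comp τ AffineMap.hasDerivAt_lineMap))
      (fun τ _ => ((((hasDerivAt_gaussianPDFReal_zero_one _).comp τ
        AffineMap.hasDerivAt_lineMap).mul_const _).sub
        (((hasDerivAt_gaussianPDFReal_zero_one _).comp τ
          AffineMap.hasDerivAt_lineMap).mul_const _))) fun τ hτ => ?_
    have hv := Phi_PhiInv (Phi_sub_mem_Ioo (hab τ hτ))
    have := gaussian_hessian_nonpos hv (x.1 - y.1) (x.2 - y.2)
    linarith
  have := hline.2 (x := 1) (y := 0) ⟨zero_le_one, le_rfl⟩ ⟨le_rfl, zero_le_one⟩ hs ht hst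
  simpa [a, b, AffineMap.lineMap_apply_module, add_comm] using this

lemma exists_mem_lt_ofReal_Phi_sub {A : Set ℝ} (hA : MeasurableSet A) {r : ℝ≥0∞}
    (hr : r < gaussian1 A) : ∃ a ∈ A, ∃ b ∈ A, r < ENNReal.ofReal (Phi b - Phi a) := by
  rw [gaussian1_eq_gaussianReal] at hr
  obtain ⟨K, hKA, hK, hrK⟩ := hA.exists_lt_isCompact hr
  have hKne : K.Nonempty := nonempty_of_measure_ne_zero (ne_bot_of_gt hrK)
  refine ⟨sInf K, hKA (hK.sInf_mem hKne), sSup K, hKA (hK.sSup_mem hKne), hrK.trans_le ?_⟩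
  rw [← gaussian1_Icc, gaussian1_eq_gaussianReal]
  exact measure_mono fun x hx => ⟨csInf_le hK.bddBelow hx, le_csSup hK.bddAbove hx⟩

lemma ofReal_Phi_le_gaussian1_smul_add_smul {A B : Set ℝ} (hAconv : Convex ℝ A)
    (hBconv : Convex ℝ B) (hAm : MeasurableSet A) (hBm : MeasurableSet B) {l : ℝ} (hl0 : 0 ≤ l)
    (hl1 : l ≤ 1) {x y : ℝ} (hx : ENNReal.ofReal (Phi x) < gaussian1 A)
    (hy : ENNReal.ofReal (Phi y) < gaussian1 B) :
    ENNReal.ofReal (Phi (l * x + (1 - l) * y)) ≤ gaussian1 (l • A + (1 - l) • B) := by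
  obtain ⟨a₁, ha₁, b₁, hb₁, hx⟩ := exists_mem_lt_ofReal_Phi_sub hAm hx
  obtain ⟨a₂, ha₂, b₂, hb₂, hy⟩ := exists_mem_lt_ofReal_Phi_sub hBm hy
  rw [ENNReal.ofReal_lt_ofReal_iff'] at hx hy
  have h₁ : a₁ < b₁ := strictMono_Phi.lt_iff_lt.1 (by linarith [Phi_pos x])
  have h₂ : a₂ < b₂ := strictMono_Phi.lt_iff_lt.1 (by linarith [Phi_pos y])
  have hmem := concaveOn_PhiInv_Phi_sub.1 (x := (a₁, b₁)) (y := (a₂, b₂)) h₁ h₂ hl0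
    (sub_nonneg.2 hl1) (by ring)
  have hconc := concaveOn_PhiInv_Phi_sub.2 (x := (a₁, b₁)) (y := (a₂, b₂)) h₁ h₂ hl0
    (sub_nonneg.2 hl1) (by ring)
  simp only [mem_ofPred_eq, Prod.fst_add, Prod.snd_add, Prod.smul_mk, smul_eq_mul] at hmem hconc
  have hsub : Icc (l * a₁ + (1 - l) * a₂) (l * b₁ + (1 - l) * b₂) ⊆ l • A + (1 - l) • B :=
    ((hAconv.smul l).add (hBconv.smul (1 - l))).ordConnected.out
      (add_mem_add (smul_mem_smul_set ha₁) (smul_mem_smul_set ha₂))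
      (add_mem_add (smul_mem_smul_set hb₁) (smul_mem_smul_set hb₂))
  refine le_trans ?_ ((gaussian1_Icc _ _).symm.trans_le (measure_mono hsub))
  refine ENNReal.ofReal_le_ofReal ((le_PhiInv_iff (Phi_sub_mem_Ioo hmem)).1 (le_trans ?_ hconc))
  have hx' := (lt_PhiInv_iff (Phi_sub_mem_Ioo h₁)).2 hx.1
  have hy' := (lt_PhiInv_iff (Phi_sub_mem_Ioo h₂)).2 hy.1
  nlinarith

lemma ENNReal.toReal_mem_Ioo {m : ℝ≥0∞} (h0 : m ≠ 0) (h1 : m < 1) : m.toReal ∈ Ioo (0 : ℝ) 1 := by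
  have hm : m ≠ ⊤ := (h1.trans ENNReal.one_lt_top).ne
  exact ⟨ENNReal.toReal_pos h0 hm, by simpa using (ENNReal.toReal_lt_toReal hm one_ne_top).2 h1⟩

lemma ofReal_Phi_lt_of_coe_lt_PhiInvE {x : ℝ} {m : ℝ≥0∞} (h : (x : EReal) < PhiInvE m) :
    ENNReal.ofReal (Phi x) < m := by
  unfold PhiInvE at h
  split_ifs at h with h0 h1
  · exact absurd h not_lt_bot
  · exact (ENNReal.ofReal_lt_one.2 (Phi_lt_one x)).trans_le h1
  · rw [not_le] at h1
    rw [EReal.coe_lt_coe_iff, lt_PhiInv_iff (ENNReal.toReal_mem_Ioo h0 h1)] at h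
    exact (ENNReal.ofReal_lt_iff_lt_toReal (Phi_pos x).le (h1.trans ENNReal.one_lt_top).ne).2 h

lemma coe_le_PhiInvE_of_ofReal_Phi_le {z : ℝ} {m : ℝ≥0∞} (h : ENNReal.ofReal (Phi z) ≤ m) :
    (z : EReal) ≤ PhiInvE m := by
  unfold PhiInvE
  split_ifs with h0 h1
  · exact absurd (h0 ▸ h) (by simpa using Phi_pos z)
  · exact le_top
  · rw [not_le] at h1
    rw [EReal.coe_le_coe_iff, le_PhiInv_iff (ENNReal.toReal_mem_Ioo h0 h1)]
    exact (ENNReal.ofReal_le_iff_le_toReal (h1.trans ENNReal.one_lt_top).ne).1 h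

lemma EReal.exists_eq_mul_add_mul_of_coe_lt {s t z : ℝ} (hs : 0 < s) (ht : 0 < t) {α β : EReal}
    (h : (z : EReal) < s * α + t * β) :
    ∃ x y : ℝ, (x : EReal) < α ∧ (y : EReal) < β ∧ z = s * x + t * y := by
  induction α using EReal.rec with
  | bot => simp [EReal.coe_mul_bot_of_pos hs] at h
  | coe a =>
    induction β using EReal.rec with
    | bot => simp [EReal.coe_mul_bot_of_pos ht] at h
    | coe b =>
      have hz : z < s * a + t * b := by exact_mod_cast h
      set δ := (s * a + t * b - z) / (s + t)
      have hδ : 0 < δ := _root_.div_pos (by linarith) (by linarith)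
      refine ⟨a - δ, b - δ, by exact_mod_cast sub_lt_self a hδ,
        by exact_mod_cast sub_lt_self b hδ, ?_⟩
      simp only [δ]; field_simp; ring
    | top => exact ⟨a - 1, (z - s * (a - 1)) / t, by exact_mod_cast sub_one_lt a,
        EReal.coe_lt_top _, by field_simp; ring⟩
  | top =>
    obtain ⟨y, hy⟩ : ∃ y : ℝ, (y : EReal) < β := by
      induction β using EReal.rec with
      | bot => simp [EReal.coe_mul_bot_of_pos ht] at h
      | coe b => exact ⟨b - 1, by exact_mod_cast sub_one_lt b⟩
      | top => exact ⟨0, EReal.coe_lt_top 0⟩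
    exact ⟨(z - t * y) / s, y, EReal.coe_lt_top _, hy, by field_simp; ring⟩

theorem stmt_16 (A B : Set ℝ) (hA : A.Nonempty) (hB : B.Nonempty)
    (hAconv : Convex ℝ A) (hBconv : Convex ℝ B)
    (hAm : MeasurableSet A) (hBm : MeasurableSet B)
    (l : ℝ) (hl0 : 0 ≤ l) (hl1 : l ≤ 1) :
    PhiInvE (gaussian1 (l • A + (1 - l) • B)) ≥
      (l : EReal) * PhiInvE (gaussian1 A) + ((1 - l : ℝ) : EReal) * PhiInvE (gaussian1 B) := by
  rcases hl0.eq_or_lt with rfl | hl0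
  · simp [zero_smul_set hA]
  rcases hl1.eq_or_lt with rfl | hl1
  · simp [zero_smul_set hB]
  refine EReal.ge_of_forall_gt_iff_ge.1 fun z hz => ?_
  obtain ⟨x, y, hx, hy, rfl⟩ := EReal.exists_eq_mul_add_mul_of_coe_lt hl0 (sub_pos.2 hl1) hz
  exact coe_le_PhiInvE_of_ofReal_Phi_le <| ofReal_Phi_le_gaussian1_smul_add_smul hAconv hBconv
    hAm hBm hl0.le hl1.le (ofReal_Phi_lt_of_coe_lt_PhiInvE hx) (ofReal_Phi_lt_of_coe_lt_PhiInvE hy)
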